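/- Let e₁, f₁, g₁, l₁ ∈ ℝ³, let (f₂,f₂') be a pair of vectors in ℝ³, assume det(e₁,f₁,l₁) ≠ 0 and det(f₂,f₂',g₁) ≠ 0, and let M be an invertible 3×3 real matrix. Then the first double ratio is unchanged when every vector w among e₁,f₁,f₂,f₂',g₁,l₁ is replaced by M·w; that is, D₁(ME,MF,MG,ML) = D₁(E,F,G,L). -/
import Mathlib


/-- The determinant of the 3×3 real matrix with columns `a`, `b`, `c`. -/
noncomputable def det3 (a b c : Fin 3 → ℝ) : ℝ :=
  Matrix.det (Matrix.transpose (Matrix.of ![a, b, c]))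

/-- The first double ratio `D₁(E,F,G,L)` of a quadruple of flags whose lines are spanned
by `e₁, f₁, g₁, l₁` and where the plane of `F` is spanned by `f₂, f₂'`. -/
noncomputable def doubleRatio₁ (e₁ f₁ f₂ f₂' g₁ l₁ : Fin 3 → ℝ) : ℝ :=
  -(det3 e₁ f₁ g₁ / det3 e₁ f₁ l₁) * (det3 f₂ f₂' l₁ / det3 f₂ f₂' g₁)

lemma det3_mulVec (M : Matrix (Fin 3) (Fin 3) ℝ) (a b c : Fin 3 → ℝ) :
    det3 (M.mulVec a) (M.mulVec b) (M.mulVec c) = M.det * det3 a b c := by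
  have : (Matrix.of ![M.mulVec a, M.mulVec b, M.mulVec c]).transpose
      = M * (Matrix.of ![a, b, c]).transpose := by
    ext i j
    fin_cases j <;> simp [Matrix.mul_apply, Matrix.mulVec, dotProduct, Matrix.transpose]
  rw [det3, this, Matrix.det_mul, det3]

/-- The first double ratio is invariant under the action of an invertible matrix `M`
on all the vectors defining the flags: `D₁(ME,MF,MG,ML) = D₁(E,F,G,L)`. -/
theorem doubleRatio₁_matrix_invariant (e₁ f₁ f₂ f₂' g₁ l₁ : Fin 3 → ℝ)
    (h₁ : det3 e₁ f₁ l₁ ≠ 0) (h₂ : det3 f₂ f₂' g₁ ≠ 0)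
    (M : Matrix (Fin 3) (Fin 3) ℝ) (hM : IsUnit M) :
    doubleRatio₁ (M.mulVec e₁) (M.mulVec f₁) (M.mulVec f₂) (M.mulVec f₂')
      (M.mulVec g₁) (M.mulVec l₁)
    = doubleRatio₁ e₁ f₁ f₂ f₂' g₁ l₁ := by
  have hd : M.det ≠ 0 := by
    simpa [Matrix.isUnit_iff_isUnit_det, isUnit_iff_ne_zero] using hM
  simp only [doubleRatio₁, det3_mulVec]
  rw [mul_div_mul_left _ _ hd, mul_div_mul_left _ _ hd]
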